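/- Let τ be a conformal automorphism of the open unit disc 𝔻 such that none of τ, τ ∘ τ, τ ∘ τ ∘ τ equals the identity map of 𝔻. Then there exists z₀ ∈ 𝔻 such that the four points z₀, τ(z₀), τ²(z₀), τ³(z₀) are pairwise distinct. -/

import Mathlib

open Set Metric Complex MeasureTheory Filter

noncomputable section

/-- The open unit disc in `ℂ`. -/
def D : Set ℂ := Metric.ball (0 : ℂ) 1

/-- `H^∞(𝔻)`: bounded analytic functions on the open unit disc.  Functions are represented by
their values on `ℂ`; only the values on `D` are relevant, and two representatives are
identified when they agree on `D`. -/
def Hinf : Set (ℂ → ℂ) :=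
  {f | DifferentiableOn ℂ f D ∧ ∃ C : ℝ, ∀ z ∈ D, ‖f z‖ ≤ C}

/-- `H^∞_0(𝔻) = {f ∈ H^∞(𝔻) : f 0 = 0}`. -/
def Hinf0 : Set (ℂ → ℂ) := {f | f ∈ Hinf ∧ f 0 = 0}

/-- The Neil algebra `H^∞_1(𝔻) = {f ∈ H^∞(𝔻) : f'(0) = 0}`. -/
def Hinf1 : Set (ℂ → ℂ) := {f | f ∈ Hinf ∧ deriv f 0 = 0}

/-- `T` is an automorphism (bijective ℂ-linear multiplicative map) of the algebra of
holomorphic functions `A`, where two functions are identified when they agree on `D`. -/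
def IsAlgAutOn (A : Set (ℂ → ℂ)) (T : (ℂ → ℂ) → (ℂ → ℂ)) : Prop :=
  (∀ f ∈ A, T f ∈ A) ∧
  (∀ f ∈ A, ∀ g ∈ A, Set.EqOn f g D → Set.EqOn (T f) (T g) D) ∧
  (∀ f ∈ A, ∀ g ∈ A, Set.EqOn (T (f + g)) (T f + T g) D) ∧
  (∀ (c : ℂ), ∀ f ∈ A, Set.EqOn (T (c • f)) (c • T f) D) ∧
  (∀ f ∈ A, ∀ g ∈ A, Set.EqOn (T (f * g)) (T f * T g) D) ∧
  (∀ f ∈ A, ∀ g ∈ A, Set.EqOn (T f) (T g) D → Set.EqOn f g D) ∧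
  (∀ g ∈ A, ∃ f ∈ A, Set.EqOn (T f) g D)

/-- A function in `H^∞(𝔻)` is inner if its radial boundary values have modulus one at almost
every boundary point. -/
def IsInner (φ : ℂ → ℂ) : Prop :=
  φ ∈ Hinf ∧ ∀ᵐ (θ : ℝ) ∂(volume : Measure ℝ),
    Filter.Tendsto (fun r : ℝ => ‖φ ((r : ℂ) * Complex.exp ((θ : ℂ) * Complex.I))‖)
      (nhdsWithin 1 (Set.Iio 1)) (nhds 1)

/-- A conformal automorphism of the unit disc: a bijective holomorphic self-map of `D`. -/
def IsConfAut (τ : ℂ → ℂ) : Prop := DifferentiableOn ℂ τ D ∧ Set.BijOn τ D D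

/-- If `τ` is a conformal automorphism of the unit disc such that none of `τ`, `τ²`, `τ³` is
the identity of `𝔻`, then there is a point `z₀ ∈ 𝔻` whose first four orbit points
`z₀, τ(z₀), τ²(z₀), τ³(z₀)` are pairwise distinct. -/
theorem exists_point_with_distinct_orbit (τ : ℂ → ℂ) (hτ : IsConfAut τ)
    (h1 : ¬ Set.EqOn τ id D) (h2 : ¬ Set.EqOn (τ ∘ τ) id D)
    (h3 : ¬ Set.EqOn (τ ∘ τ ∘ τ) id D) :
    ∃ z₀ ∈ D, z₀ ≠ τ z₀ ∧ z₀ ≠ τ (τ z₀) ∧ z₀ ≠ τ (τ (τ z₀)) ∧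
      τ z₀ ≠ τ (τ z₀) ∧ τ z₀ ≠ τ (τ (τ z₀)) ∧ τ (τ z₀) ≠ τ (τ (τ z₀)) := by
  have hopen : IsOpen D := isOpen_ball
  have hconn : IsPreconnected D := (convex_ball (0:ℂ) 1).isPreconnected
  have h0D : (0 : ℂ) ∈ D := by simp [D]
  have hmaps : Set.MapsTo τ D D := hτ.2.mapsTo
  have hd1 : DifferentiableOn ℂ τ D := hτ.1
  have hd2 : DifferentiableOn ℂ (τ ∘ τ) D := hd1.comp hd1 hmaps
  have hd3 : DifferentiableOn ℂ (τ ∘ τ ∘ τ) D := hd1.comp hd2 (hmaps.comp hmaps)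
  have hid : AnalyticOnNhd ℂ (id : ℂ → ℂ) D := fun z _ => analyticAt_id
  have key : ∀ g : ℂ → ℂ, DifferentiableOn ℂ g D → ¬ Set.EqOn g id D →
      ∀ᶠ z in nhdsWithin (0:ℂ) {(0:ℂ)}ᶜ, g z ≠ z := by
    intro g hg hne
    have hga : AnalyticOnNhd ℂ g D := hg.analyticOnNhd hopen
    rcases (hga 0 h0D).eventually_eq_or_eventually_ne (hid 0 h0D) with h | h
    · exact absurd (hga.eqOn_of_preconnected_of_eventuallyEq hid hconn h0D h) hne
    · exact h
  have e1 := key τ hd1 h1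
  have e2 := key (τ ∘ τ) hd2 h2
  have e3 := key (τ ∘ τ ∘ τ) hd3 h3
  have eD : ∀ᶠ z in nhdsWithin (0:ℂ) {(0:ℂ)}ᶜ, z ∈ D :=
    mem_nhdsWithin_of_mem_nhds (hopen.mem_nhds h0D)
  obtain ⟨z₀, ⟨⟨hz1, hz2⟩, hz3⟩, hzD⟩ := (((e1.and e2).and e3).and eD).exists
  have hz₀D : z₀ ∈ D := hzD
  have hτz : τ z₀ ∈ D := hmaps hz₀D
  have hττz : τ (τ z₀) ∈ D := hmaps hτz
  have inj := hτ.2.injOn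
  refine ⟨z₀, hz₀D, (Ne.symm hz1), (Ne.symm hz2), (Ne.symm hz3), ?_, ?_, ?_⟩
  · exact fun h => hz1 (inj hz₀D hτz h).symm
  · exact fun h => hz2 (congrArg id (inj hz₀D hττz h)).symm
  · exact fun h => hz1 (inj hz₀D hτz (inj hτz hττz h)).symm
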